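/- Let F be defined by F(1) = 1 and F(m) = F(m−1) + F(⌊m/2⌋) for m ≥ 2. Then for every real (or complex) z with |z| < 1, the series Σ_{n≥1} F(n) zⁿ converges, the infinite product ∏_{k≥0} (1 − z^{2^k}) converges to a nonzero limit, and Σ_{n≥1} F(n) zⁿ = (1/2) · ( 1/((1 − z) · ∏_{k≥0} (1 − z^{2^k})) − 1 ). -/

import Mathlib

/-- The Fibonacci-like sequence `F(1) = 1`, `F(m) = F(m-1) + F(⌊m/2⌋)` for `m ≥ 2`
(OEIS A033485); the value at `0` is set to `0`, so that `Σ_{n≥0} F(n) zⁿ = Σ_{n≥1} F(n) zⁿ`. -/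
def fibKK : ℕ → ℕ
  | 0 => 0
  | 1 => 1
  | (m + 2) => fibKK (m + 1) + fibKK ((m + 2) / 2)
decreasing_by all_goals omega

/-!
Write `G(z) = Σ F(n) zⁿ`. The recurrence says `(1 - z) G(z) = z + (1 + z) G(z²)`, i.e.
`Φ(z) := (1 - z) (1 + 2 G(z))` satisfies `Φ(z²) = (1 - z) Φ(z)`. Iterating,
`∏_{k<N} (1 - z^{2^k}) · Φ(z) = Φ(z^{2^N})`, which tends to `Φ(0) = 1`, so the infinite product
is the inverse of `Φ(z)`. The series converges for `|z| < 1` because `F` grows more slowly than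
every exponential `rⁿ` with `r > 1`.
-/

open Filter Finset Topology

lemma fibKK_succ (n : ℕ) :
    fibKK (n + 1) = fibKK n + fibKK ((n + 1) / 2) + if n = 0 then 1 else 0 := by
  cases n with
  | zero => simp [fibKK]
  | succ n => rw [fibKK, if_neg n.succ_ne_zero, add_zero]

lemma fibKK_le_mul_pow {r : ℝ} (hr : 1 < r) : ∃ C : ℝ, ∀ n, (fibKK n : ℝ) ≤ C * r ^ n := by
  obtain ⟨K, hK⟩ : ∃ K : ℕ, 1 / (r - 1) < r ^ K := pow_unbounded_of_one_lt _ hr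
  have hr1 : 0 < r - 1 := by linarith
  have hKr : 1 ≤ r ^ K * (r - 1) := by rw [div_lt_iff₀ hr1] at hK; linarith
  set C := ∑ m ∈ range (2 * K + 3), (fibKK m : ℝ)
  have hC : 0 ≤ C := sum_nonneg fun _ _ => Nat.cast_nonneg _
  refine ⟨C, fun n => ?_⟩
  induction n using Nat.strong_induction_on with
  | _ n ih =>
    by_cases hn : n ≤ 2 * K + 2
    · calc (fibKK n : ℝ) ≤ C :=
            single_le_sum (f := fun m => (fibKK m : ℝ)) (fun _ _ => Nat.cast_nonneg _)
              (mem_range.2 (by omega))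
        _ ≤ C * r ^ n := le_mul_of_one_le_right hC (one_le_pow₀ hr.le)
    obtain ⟨m, rfl⟩ : ∃ m, n = m + 2 := ⟨n - 2, by omega⟩
    -- The bound for the halved index fits into the gap `r ^ (m + 2) - r ^ (m + 1)`.
    have hpow : r ^ ((m + 2) / 2) ≤ r ^ (m + 2) - r ^ (m + 1) :=
      calc r ^ ((m + 2) / 2) ≤ r ^ ((m + 2) / 2) * (r ^ K * (r - 1)) :=
            le_mul_of_one_le_right (by positivity) hKr
        _ = r ^ ((m + 2) / 2 + K) * (r - 1) := by ring
        _ ≤ r ^ (m + 1) * (r - 1) :=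
            mul_le_mul_of_nonneg_right (pow_le_pow_right₀ hr.le (by omega)) hr1.le
        _ = r ^ (m + 2) - r ^ (m + 1) := by ring
    calc (fibKK (m + 2) : ℝ) = fibKK (m + 1) + fibKK ((m + 2) / 2) := by
          rw [fibKK]; push_cast; rfl
      _ ≤ C * r ^ (m + 1) + C * r ^ ((m + 2) / 2) :=
          add_le_add (ih _ (by omega)) (ih _ (by omega))
      _ ≤ C * r ^ (m + 2) := by nlinarith [mul_le_mul_of_nonneg_left hpow hC]

lemma summable_fibKK_mul_pow {x : ℝ} (hx0 : 0 ≤ x) (hx : x < 1) :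
    Summable fun n => (fibKK n : ℝ) * x ^ n := by
  obtain ⟨s, hxs, hs1⟩ := exists_between hx
  have hs0 : 0 < s := hx0.trans_lt hxs
  obtain ⟨C, hC⟩ := fibKK_le_mul_pow (one_lt_inv_iff₀.2 ⟨hs0, hs1⟩)
  refine Summable.of_nonneg_of_le (fun n => by positivity) (fun n => ?_)
    ((summable_geometric_of_lt_one (by positivity) ((div_lt_one hs0).2 hxs)).mul_left C)
  calc (fibKK n : ℝ) * x ^ n ≤ C * s⁻¹ ^ n * x ^ n := by gcongr; exact hC n
    _ = C * (x / s) ^ n := by rw [div_eq_inv_mul, mul_pow, mul_assoc]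

lemma hasSum_div_two_mul_pow {R : Type*} [CommSemiring R] [TopologicalSpace R]
    [IsTopologicalSemiring R] {a : ℕ → R} {z s : R}
    (h : HasSum (fun n => a n * (z ^ 2) ^ n) s) :
    HasSum (fun n => a (n / 2) * z ^ n) ((1 + z) * s) := by
  have heven (k : ℕ) : a (2 * k / 2) * z ^ (2 * k) = a k * (z ^ 2) ^ k := by
    rw [Nat.mul_div_cancel_left k two_pos, pow_mul]
  have hodd (k : ℕ) : a ((2 * k + 1) / 2) * z ^ (2 * k + 1) = z * (a k * (z ^ 2) ^ k) := by
    rw [show (2 * k + 1) / 2 = k by omega, pow_succ, pow_mul]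
    ring
  rw [add_mul, one_mul]
  exact HasSum.even_add_odd (by simpa only [heven] using h)
    (by simpa only [hodd] using h.mul_left z)

section NormedField

variable {𝕜 : Type*} [NormedField 𝕜]

lemma summable_norm_natCast_fibKK_mul_pow {x : ℝ} (hx0 : 0 ≤ x) (hx : x < 1) :
    Summable fun n => ‖(fibKK n : 𝕜)‖ * x ^ n := by
  refine Summable.of_nonneg_of_le (fun n => by positivity) (fun n => ?_)
    (summable_fibKK_mul_pow hx0 hx)
  gcongr
  simpa using Nat.norm_cast_le (α := 𝕜) (fibKK n)

lemma summable_norm_fibKK_mul_pow {z : 𝕜} (hz : ‖z‖ < 1) :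
    Summable fun n => ‖(fibKK n : 𝕜) * z ^ n‖ := by
  simpa only [norm_mul, norm_pow] using summable_norm_natCast_fibKK_mul_pow (norm_nonneg z) hz

lemma tendsto_tsum_mul_pow_nhds_zero [CompleteSpace 𝕜] {a : ℕ → 𝕜} {r : ℝ} (hr : 0 < r)
    (ha : Summable fun n => ‖a n‖ * r ^ n) :
    Tendsto (fun w => ∑' n, a n * w ^ n) (𝓝 0) (𝓝 (a 0)) := by
  have hlim : ∀ n, Tendsto (fun w : 𝕜 => a n * w ^ n) (𝓝 0) (𝓝 (a n * 0 ^ n)) :=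
    fun n => ((continuous_const.mul (continuous_pow n)).tendsto 0)
  have hbound : ∀ᶠ w : 𝕜 in 𝓝 0, ∀ n, ‖a n * w ^ n‖ ≤ ‖a n‖ * r ^ n := by
    filter_upwards [Metric.closedBall_mem_nhds (0 : 𝕜) hr] with w hw n
    rw [norm_mul, norm_pow]
    gcongr
    simpa using hw
  have hzero : ∑' n, a n * 0 ^ n = a 0 :=
    (tsum_eq_single 0 fun n hn => by simp [hn]).trans (by simp)
  simpa only [hzero] using tendsto_tsum_of_dominated_convergence ha hlim hbound

lemma tendsto_pow_two_pow_nhds_zero {z : 𝕜} (hz : ‖z‖ < 1) :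
    Tendsto (fun k => z ^ 2 ^ k) atTop (𝓝 0) :=
  (tendsto_pow_atTop_nhds_zero_of_norm_lt_one hz).comp
    (tendsto_pow_atTop_atTop_of_one_lt one_lt_two)

lemma multipliable_one_sub_pow_two_pow [CompleteSpace 𝕜] {z : 𝕜} (hz : ‖z‖ < 1) :
    Multipliable fun k => 1 - z ^ 2 ^ k := by
  simp_rw [sub_eq_add_neg]
  refine multipliable_one_add_of_summable ?_
  simp_rw [norm_neg, norm_pow]
  exact (summable_geometric_of_lt_one (norm_nonneg z) hz).comp_injective
    (Nat.pow_right_injective le_rfl)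

noncomputable def fibKKSeries (z : 𝕜) : 𝕜 := ∑' n, (fibKK n : 𝕜) * z ^ n

lemma tendsto_fibKKSeries_nhds_zero [CompleteSpace 𝕜] :
    Tendsto (fibKKSeries (𝕜 := 𝕜)) (𝓝 0) (𝓝 0) := by
  have h := tendsto_tsum_mul_pow_nhds_zero one_half_pos
    (summable_norm_natCast_fibKK_mul_pow (𝕜 := 𝕜) (by norm_num) one_half_lt_one)
  rwa [fibKK.eq_1, Nat.cast_zero] at h

lemma one_sub_mul_fibKKSeries [CompleteSpace 𝕜] {z : 𝕜} (hz : ‖z‖ < 1) :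
    (1 - z) * fibKKSeries z = z + (1 + z) * fibKKSeries (z ^ 2) := by
  have hz2 : ‖z ^ 2‖ < 1 := by rw [norm_pow]; exact pow_lt_one₀ (norm_nonneg z) hz two_ne_zero
  have hG : HasSum (fun n => (fibKK n : 𝕜) * z ^ n) (fibKKSeries z) :=
    (summable_norm_fibKK_mul_pow hz).of_norm.hasSum
  have hG2 : HasSum (fun n => (fibKK n : 𝕜) * (z ^ 2) ^ n) (fibKKSeries (z ^ 2)) :=
    (summable_norm_fibKK_mul_pow hz2).of_norm.hasSum
  have hshift : HasSum (fun n => (fibKK (n + 1) : 𝕜) * z ^ (n + 1)) (fibKKSeries z) := by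
    have := (hasSum_nat_add_iff' 1).2 hG
    rwa [sum_range_one, pow_zero, fibKK.eq_1, Nat.cast_zero, zero_mul, sub_zero] at this
  have hhalf : HasSum (fun n => (fibKK ((n + 1) / 2) : 𝕜) * z ^ (n + 1))
      ((1 + z) * fibKKSeries (z ^ 2)) := by
    have h := hasSum_div_two_mul_pow hG2
    rw [← hasSum_nat_add_iff' 1] at h
    rwa [sum_range_one, pow_zero, Nat.zero_div, fibKK.eq_1, Nat.cast_zero, zero_mul, sub_zero] at h
  have hsplit : HasSum (fun n => (fibKK (n + 1) : 𝕜) * z ^ (n + 1))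
      (z * fibKKSeries z + (1 + z) * fibKKSeries (z ^ 2) + z) := by
    have hterm (n : ℕ) : (fibKK (n + 1) : 𝕜) * z ^ (n + 1) =
        z * ((fibKK n : 𝕜) * z ^ n) + (fibKK ((n + 1) / 2) : 𝕜) * z ^ (n + 1) +
          if n = 0 then z else 0 := by
      rw [fibKK_succ]
      split_ifs with hn
      · subst hn; push_cast; ring
      · push_cast; ring
    simpa only [hterm] using ((hG.mul_left z).add hhalf).add (hasSum_ite_eq 0 z)
  linear_combination hshift.unique hsplit

lemma fibKKSeries_sq [CompleteSpace 𝕜] {z : 𝕜} (hz : ‖z‖ < 1) :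
    (1 - z ^ 2) * (1 + 2 * fibKKSeries (z ^ 2)) =
      (1 - z) * ((1 - z) * (1 + 2 * fibKKSeries z)) := by
  linear_combination (2 * z - 2) * one_sub_mul_fibKKSeries hz

lemma prod_range_mul_fibKKSeries [CompleteSpace 𝕜] {z : 𝕜} (hz : ‖z‖ < 1) (N : ℕ) :
    (∏ k ∈ range N, (1 - z ^ 2 ^ k)) * ((1 - z) * (1 + 2 * fibKKSeries z)) =
      (1 - z ^ 2 ^ N) * (1 + 2 * fibKKSeries (z ^ 2 ^ N)) := by
  induction N with
  | zero => simp
  | succ N ih =>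
    have hzN : ‖z ^ 2 ^ N‖ < 1 := by
      rw [norm_pow]; exact pow_lt_one₀ (norm_nonneg z) hz (by positivity)
    rw [prod_range_succ, pow_succ, pow_mul, fibKKSeries_sq hzN, ← ih]
    ring

lemma tprod_one_sub_pow_two_pow_mul [CompleteSpace 𝕜] {z : 𝕜} (hz : ‖z‖ < 1) :
    (∏' k, (1 - z ^ 2 ^ k)) * ((1 - z) * (1 + 2 * fibKKSeries z)) = 1 := by
  have hpow := tendsto_pow_two_pow_nhds_zero hz
  have hlim : Tendsto (fun N => (1 - z ^ 2 ^ N) * (1 + 2 * fibKKSeries (z ^ 2 ^ N))) atTop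
      (𝓝 ((1 - 0) * (1 + 2 * 0))) :=
    (tendsto_const_nhds.sub hpow).mul
      (tendsto_const_nhds.add ((tendsto_fibKKSeries_nhds_zero.comp hpow).const_mul 2))
  rw [sub_zero, mul_zero, add_zero, mul_one] at hlim
  refine tendsto_nhds_unique ?_ hlim
  simp_rw [← prod_range_mul_fibKKSeries hz]
  exact (multipliable_one_sub_pow_two_pow hz).hasProd.tendsto_prod_nat.mul_const _

end NormedField

/-- For every complex `z` with `|z| < 1` the generating series
`Σ_{n≥1} F(n) zⁿ` of the Fibonacci-like sequence A033485 converges, the infinite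
product `∏_{k≥0} (1 − z^{2^k})` converges to a nonzero limit, and
`Σ_{n≥1} F(n) zⁿ = (1/2)·(1/((1 − z)·∏_{k≥0}(1 − z^{2^k})) − 1)`. -/
theorem genF_closed_form (z : ℂ) (hz : ‖z‖ < 1) :
    Summable (fun n : ℕ => (fibKK n : ℂ) * z ^ n) ∧
    Multipliable (fun k : ℕ => 1 - z ^ (2 ^ k)) ∧
    (∏' k : ℕ, (1 - z ^ (2 ^ k))) ≠ 0 ∧
    ∑' n : ℕ, (fibKK n : ℂ) * z ^ n =
      (1 / 2) * (1 / ((1 - z) * ∏' k : ℕ, (1 - z ^ (2 ^ k))) - 1) := by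
  have key := tprod_one_sub_pow_two_pow_mul hz
  have hprod : ∏' k : ℕ, (1 - z ^ 2 ^ k) ≠ 0 := left_ne_zero_of_mul_eq_one key
  have hz1 : 1 - z ≠ 0 := left_ne_zero_of_mul (right_ne_zero_of_mul_eq_one key)
  refine ⟨(summable_norm_fibKK_mul_pow hz).of_norm, multipliable_one_sub_pow_two_pow hz, hprod, ?_⟩
  change fibKKSeries z = _
  field_simp
  linear_combination key
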